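/- Let m ≥ 2. For a weight value w, let A_w = #{(a,b) ∈ F_{2^m} × F_{2^m} : wt(c(a,b)) = w}, where wt(c(a,b)) = #{(x,y) ∈ D_3 : Tr(axy + bx) = 1}. Then A_0 = 1 (attained only by (a,b) = (0,0)), A_{2^{m−2}(2^m−1)} = 2^m(2^{m−1} − 1), A_{2^{2m−2}} = 2^m + 2^{m−1} − 1, A_{2^{m−2}(2^m+1)} = 2^m(2^{m−1} − 1), A_{2^{m−1}(2^{m−1}+1)} = 2^{m−1}, and A_w = 0 for every other value of w. In particular, the code C_{D_3} has length 2^{2m−1}, exactly 2^{2m} codewords, minimum distance 2^{m−2}(2^m − 1), and exactly four nonzero weights. -/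
import Mathlib


attribute [local instance] Classical.propDecidable

noncomputable instance (m : ℕ) : Fintype (GaloisField 2 m) := Fintype.ofFinite _

/-- The absolute trace map from `F_{2^m}` to `F_2`. -/
noncomputable def Tr (m : ℕ) (x : GaloisField 2 m) : ZMod 2 :=
  Algebra.trace (ZMod 2) (GaloisField 2 m) x

/-- For `t ∈ F_2`, `sgn t` is the integer `(-1)^t`. -/
def sgn : ZMod 2 → ℤ := fun t => if t = 0 then 1 else -1

/-- The set `Υ₁ = {r + r⁻¹ : r ∈ F_{2^m}^*, r ≠ 1}`. -/
def Ups1 (m : ℕ) : Set (GaloisField 2 m) :=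
  {u | ∃ r : GaloisField 2 m, r ≠ 0 ∧ r ≠ 1 ∧ u = r + r⁻¹}

namespace S15
variable {m : ℕ}

lemma zmod2_ne0 (t : ZMod 2) : ¬ (t = 0) ↔ t = 1 := by revert t; decide
lemma zmod2_ne1 (t : ZMod 2) : ¬ (t = 1) ↔ t = 0 := by revert t; decide
lemma zmod2_shift (s t : ZMod 2) : s + t = 1 ↔ s = 1 + t := by revert s t; decide
lemma Tr_add (x y : GaloisField 2 m) : Tr m (x + y) = Tr m x + Tr m y := map_add _ _ _
lemma Tr_zero : Tr m (0 : GaloisField 2 m) = 0 := map_zero _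

lemma card_F (hm : 1 ≤ m) : Fintype.card (GaloisField 2 m) = 2 ^ m := by
  have := GaloisField.card (p := 2) (n := m) (by omega)
  rwa [Nat.card_eq_fintype_card] at this

lemma card_filter_prod {α β : Type*} [Fintype α] [Fintype β] (R : α → β → Prop)
    [DecidablePred fun p : α × β => R p.1 p.2] [∀ x, DecidablePred (R x)] :
    (Finset.univ.filter fun p : α × β => R p.1 p.2).card
      = ∑ x : α, (Finset.univ.filter fun y => R x y).card := by
  rw [Finset.card_filter, Fintype.sum_prod_type]
  refine Finset.sum_congr rfl fun x _ => ?_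
  rw [Finset.card_filter]

noncomputable def cntT (m : ℕ) (v : GaloisField 2 m) (ε : ZMod 2) : ℕ :=
  (Finset.univ.filter fun y => Tr m (v * y) = ε).card

lemma cntT_add (hm : 1 ≤ m) (v : GaloisField 2 m) : cntT m v 0 + cntT m v 1 = 2 ^ m := by
  have h := Finset.card_filter_add_card_filter_not
    (s := (Finset.univ : Finset (GaloisField 2 m))) (p := fun y => Tr m (v * y) = 0)
  rw [Finset.card_univ, card_F hm] at h
  simp only [zmod2_ne0] at h
  exact h

lemma cntT_eq01 {v : GaloisField 2 m} (hv : v ≠ 0) : cntT m v 0 = cntT m v 1 := by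
  obtain ⟨z, hz⟩ := Algebra.trace_surjective (ZMod 2) (GaloisField 2 m) 1
  set y₁ := v⁻¹ * z with hy₁
  have hvy₁ : Tr m (v * y₁) = 1 := by
    rw [hy₁, ← mul_assoc, mul_inv_cancel₀ hv, one_mul]; exact hz
  unfold cntT
  apply Finset.card_bij' (fun y _ => y + y₁) (fun y _ => y + y₁)
  · intro y hy
    simp only [Finset.mem_filter, Finset.mem_univ, true_and] at hy ⊢
    rw [mul_add, Tr_add, hy, hvy₁, zero_add]
  · intro y hy
    simp only [Finset.mem_filter, Finset.mem_univ, true_and] at hy ⊢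
    rw [mul_add, Tr_add, hy, hvy₁]
    decide
  · intro y _; rw [add_assoc, CharTwo.add_self_eq_zero, add_zero]
  · intro y _; rw [add_assoc, CharTwo.add_self_eq_zero, add_zero]

lemma cntT_eq (hm : 1 ≤ m) {v : GaloisField 2 m} (hv : v ≠ 0) (ε : ZMod 2) :
    cntT m v ε = 2 ^ (m - 1) := by
  have h1 := cntT_add hm v
  have h2 := cntT_eq01 hv
  have h3 : 2 ^ m = 2 * 2 ^ (m - 1) := by rw [← pow_succ']; congr 1; omega
  have : ε = 0 ∨ ε = 1 := by revert ε; decide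
  rcases this with h | h <;> subst h <;> omega

lemma cntT_zero (hm : 1 ≤ m) (ε : ZMod 2) :
    cntT m (0 : GaloisField 2 m) ε = if ε = 0 then 2 ^ m else 0 := by
  unfold cntT
  by_cases hε : ε = 0
  · subst hε
    rw [if_pos rfl, ← card_F (m := m) hm, ← Finset.card_univ]
    congr 1
    ext y
    simp [Tr_zero]
  · rw [if_neg hε, Finset.card_eq_zero]
    ext y
    simp only [Finset.mem_filter, Finset.mem_univ, true_and, Finset.notMem_empty, iff_false]
    rw [zero_mul, Tr_zero]
    exact fun h => hε h.symm

noncomputable def cnt2 (m : ℕ) (u v : GaloisField 2 m) (ε₁ ε₂ : ZMod 2) : ℕ :=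
  (Finset.univ.filter fun y => Tr m (u * y) = ε₁ ∧ Tr m (v * y) = ε₂).card

lemma cnt2_right (u v : GaloisField 2 m) (ε : ZMod 2) :
    cnt2 m u v ε 0 + cnt2 m u v ε 1 = cntT m u ε := by
  unfold cnt2 cntT
  have h := Finset.card_filter_add_card_filter_not
    (s := Finset.univ.filter fun y : GaloisField 2 m => Tr m (u * y) = ε)
    (p := fun y => Tr m (v * y) = 0)
  rw [Finset.filter_filter, Finset.filter_filter] at h
  simp only [zmod2_ne0] at h
  exact h

lemma cnt2_left (u v : GaloisField 2 m) (ε : ZMod 2) :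
    cnt2 m u v 0 ε + cnt2 m u v 1 ε = cntT m v ε := by
  have key : ∀ δ, cnt2 m u v δ ε = cnt2 m v u ε δ := by
    intro δ; unfold cnt2; congr 1; apply Finset.filter_congr; intro y _
    simp [and_comm]
  rw [key, key, cnt2_right]

lemma cnt2_diag (u v : GaloisField 2 m) :
    cnt2 m u v 0 0 + cnt2 m u v 1 1 = cntT m (u + v) 0 := by
  unfold cnt2 cntT
  have hsplit : (Finset.univ.filter fun y => Tr m ((u + v) * y) = 0)
      = (Finset.univ.filter fun y : GaloisField 2 m =>
          (Tr m (u * y) = 0 ∧ Tr m (v * y) = 0) ∨ (Tr m (u * y) = 1 ∧ Tr m (v * y) = 1)) := by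
    apply Finset.filter_congr; intro y _
    rw [add_mul, Tr_add]
    have : ∀ s t : ZMod 2, s + t = 0 ↔ ((s = 0 ∧ t = 0) ∨ (s = 1 ∧ t = 1)) := by decide
    exact this _ _
  have hdisj : Disjoint
      (Finset.univ.filter fun y : GaloisField 2 m => Tr m (u * y) = 0 ∧ Tr m (v * y) = 0)
      (Finset.univ.filter fun y : GaloisField 2 m => Tr m (u * y) = 1 ∧ Tr m (v * y) = 1) := by
    rw [Finset.disjoint_left]
    intro y h1 h2
    simp only [Finset.mem_filter, Finset.mem_univ, true_and] at h1 h2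
    rw [h1.1] at h2
    exact absurd h2.1 (by decide)
  rw [hsplit, Finset.filter_or, Finset.card_union_of_disjoint hdisj]

lemma cnt2_eq (hm : 2 ≤ m) {u v : GaloisField 2 m} (hu : u ≠ 0) (hv : v ≠ 0) (huv : u ≠ v)
    (ε₁ ε₂ : ZMod 2) : cnt2 m u v ε₁ ε₂ = 2 ^ (m - 2) := by
  have huv0 : u + v ≠ 0 := by
    intro h; apply huv
    rw [CharTwo.add_eq_iff_eq_add] at h; rw [h, zero_add]
  have hm1 : (1:ℕ) ≤ m := by omega
  have h1 := cnt2_right u v 0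
  have h2 := cnt2_right u v 1
  have h3 := cnt2_left u v 0
  have h4 := cnt2_left u v 1
  have h5 := cnt2_diag u v
  rw [cntT_eq hm1 hu] at h1 h2
  rw [cntT_eq hm1 hv] at h3 h4
  rw [cntT_eq hm1 huv0] at h5
  have h6 : 2 ^ (m-1) = 2 * 2 ^ (m - 2) := by rw [← pow_succ']; congr 1; omega
  have he1 : ε₁ = 0 ∨ ε₁ = 1 := by revert ε₁; decide
  have he2 : ε₂ = 0 ∨ ε₂ = 1 := by revert ε₂; decide
  rcases he1 with h|h <;> subst h <;> rcases he2 with h|h <;> subst h <;> omega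

lemma cnt2_u0 (v : GaloisField 2 m) (ε : ZMod 2) : cnt2 m 0 v 0 ε = cntT m v ε := by
  unfold cnt2 cntT
  congr 1
  apply Finset.filter_congr
  intro y _
  rw [zero_mul, Tr_zero]
  simp

lemma cnt2_v0 (u : GaloisField 2 m) (ε : ZMod 2) :
    cnt2 m u 0 0 ε = if ε = 0 then cntT m u 0 else 0 := by
  unfold cnt2 cntT
  by_cases hε : ε = 0
  · subst hε
    rw [if_pos rfl]
    congr 1
    apply Finset.filter_congr
    intro y _
    rw [zero_mul, Tr_zero]
    simp
  · rw [if_neg hε, Finset.card_eq_zero]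
    ext y
    simp only [Finset.mem_filter, Finset.mem_univ, true_and, Finset.notMem_empty, iff_false]
    rw [zero_mul, Tr_zero]
    exact fun h => hε h.2.symm

lemma cnt2_uu (u : GaloisField 2 m) (ε : ZMod 2) :
    cnt2 m u u 0 ε = if ε = 0 then cntT m u 0 else 0 := by
  unfold cnt2 cntT
  by_cases hε : ε = 0
  · subst hε
    rw [if_pos rfl]
    congr 1
    apply Finset.filter_congr
    intro y _
    simp
  · rw [if_neg hε, Finset.card_eq_zero]
    ext y
    simp only [Finset.mem_filter, Finset.mem_univ, true_and, Finset.notMem_empty, iff_false]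
    intro h
    exact hε (h.1 ▸ h.2).symm

lemma sq_add_ne {x : GaloisField 2 m} (hx0 : x ≠ 0) (hx1 : x ≠ 1) : x ^ 2 + x ≠ 0 := by
  intro h
  have h2 : x * (x + 1) = 0 := by
    calc x * (x + 1) = x ^ 2 + x := by ring
    _ = 0 := h
  rcases mul_eq_zero.mp h2 with h3 | h3
  · exact hx0 h3
  · apply hx1
    rw [CharTwo.add_eq_iff_eq_add] at h3
    rw [h3, zero_add]

lemma sq_add_ne_mul {x a : GaloisField 2 m} (hx0 : x ≠ 0) (hxa : x ≠ a + 1) :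
    x ^ 2 + x ≠ a * x := by
  intro h
  apply hxa
  have h2 : x * (x + 1) = x * a := by
    calc x * (x + 1) = x ^ 2 + x := by ring
    _ = a * x := h
    _ = x * a := by ring
  have h3 := mul_left_cancel₀ hx0 h2
  rw [CharTwo.add_eq_iff_eq_add] at h3
  exact h3

end S15

namespace S15
variable {m : ℕ}

noncomputable def gcnt (m : ℕ) (a b x : GaloisField 2 m) : ℕ :=
  (Finset.univ.filter fun y => (x ≠ 0 ∧ Tr m (y * x ^ 2 + x * y) = 0)
    ∧ Tr m (a * x * y + b * x) = 1).card

lemma gcnt_zero (a b : GaloisField 2 m) : gcnt m a b 0 = 0 := by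
  unfold gcnt
  rw [Finset.card_eq_zero]
  ext y
  simp

lemma gcnt_ne {x : GaloisField 2 m} (a b : GaloisField 2 m) (hx0 : x ≠ 0) :
    gcnt m a b x = cnt2 m (x ^ 2 + x) (a * x) 0 (1 + Tr m (b * x)) := by
  unfold gcnt cnt2
  congr 1
  apply Finset.filter_congr
  intro y _
  rw [show y * x ^ 2 + x * y = (x ^ 2 + x) * y by ring,
      show a * x * y + b * x = (a * x) * y + b * x by ring, Tr_add, zmod2_shift]
  simp [hx0]

lemma gcnt_one (a b : GaloisField 2 m) :
    gcnt m a b 1 = cntT m a (1 + Tr m b) := by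
  rw [gcnt_ne a b one_ne_zero]
  rw [show ((1:GaloisField 2 m) ^ 2 + 1) = 0 by rw [one_pow]; exact CharTwo.add_self_eq_zero 1,
      mul_one, mul_one, cnt2_u0]

lemma zmod2_onep0 : (1 + 0 : ZMod 2) = 1 := by decide
lemma zmod2_onep1 : (1 + 1 : ZMod 2) = 0 := by decide

lemma one_add_one_F : (1 : GaloisField 2 m) + 1 = 0 := CharTwo.add_self_eq_zero 1

lemma W_eq (hm : 2 ≤ m) (j : ℕ) (hj : 2 ^ (m - 2) = j + 1) (a b : GaloisField 2 m) :
    ∑ x : GaloisField 2 m, gcnt m a b x =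
      if a = 0 then (if b = 0 then 0 else
        if Tr m b = 1 then 4*(j*j)+10*j+6 else 4*(j*j)+8*j+4)
      else if a = 1 then 4*(j*j)+8*j+4
      else if Tr m (b*(a+1)) = 1 then 4*(j*j)+9*j+5 else 4*(j*j)+7*j+3 := by
  have hm1 : (1:ℕ) ≤ m := by omega
  have hh : 2 ^ (m-1) = 2*j+2 := by
    rw [show m - 1 = (m-2)+1 by omega, pow_succ, hj]; ring
  have hq : 2 ^ m = 4*j+4 := by
    rw [show m = (m-2)+2 by omega, pow_add, hj]; ring
  have e0 : ∑ x : GaloisField 2 m, gcnt m a b x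
      = gcnt m a b 0 + ∑ x ∈ Finset.univ.erase 0, gcnt m a b x :=
    (Finset.add_sum_erase _ _ (Finset.mem_univ 0)).symm
  have h1mem : (1 : GaloisField 2 m) ∈ Finset.univ.erase 0 :=
    Finset.mem_erase.mpr ⟨one_ne_zero, Finset.mem_univ 1⟩
  have e1 : ∑ x ∈ Finset.univ.erase 0, gcnt m a b x
      = gcnt m a b 1 + ∑ x ∈ (Finset.univ.erase 0).erase 1, gcnt m a b x :=
    (Finset.add_sum_erase _ _ h1mem).symm
  set s : Finset (GaloisField 2 m) := (Finset.univ.erase 0).erase 1 with hs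
  have hscard : s.card = 4*j+2 := by
    rw [hs, Finset.card_erase_of_mem h1mem, Finset.card_erase_of_mem (Finset.mem_univ 0),
        Finset.card_univ, card_F hm1, hq]
    omega
  have hsmem : ∀ x ∈ s, x ≠ 0 ∧ x ≠ 1 := by
    intro x hx
    rw [hs, Finset.mem_erase, Finset.mem_erase] at hx
    exact ⟨hx.2.1, hx.1⟩
  rw [e0, e1, gcnt_zero, zero_add]
  by_cases ha0 : a = 0
  · subst ha0
    rw [if_pos rfl, gcnt_one, cntT_zero hm1]
    by_cases hb0 : b = 0
    · subst hb0
      rw [if_pos rfl, Tr_zero, zmod2_onep0, if_neg one_ne_zero]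
      have hz : ∑ x ∈ s, gcnt m 0 0 x = 0 := by
        apply Finset.sum_eq_zero
        intro x hx
        obtain ⟨hx0, hx1⟩ := hsmem x hx
        rw [gcnt_ne _ _ hx0, zero_mul, Tr_zero, zmod2_onep0, cnt2_v0,
            if_neg one_ne_zero]
      rw [hz]
    · rw [if_neg hb0]
      have hptwise : ∀ x ∈ s, gcnt m 0 b x = if Tr m (b * x) = 1 then 2*j+2 else 0 := by
        intro x hx
        obtain ⟨hx0, hx1⟩ := hsmem x hx
        rw [gcnt_ne _ _ hx0, zero_mul, cnt2_v0]
        by_cases hT : Tr m (b * x) = 1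
        · rw [if_pos hT, hT, zmod2_onep1, if_pos rfl,
              cntT_eq hm1 (sq_add_ne hx0 hx1), hh]
        · rw [if_neg hT, (zmod2_ne1 _).mp hT, zmod2_onep0, if_neg one_ne_zero]
      have hsum : ∑ x ∈ s, gcnt m 0 b x
          = (2*j+2) * (s.filter fun x => Tr m (b * x) = 1).card := by
        rw [Finset.sum_congr rfl hptwise, ← Finset.sum_filter, Finset.sum_const,
            smul_eq_mul, mul_comm]
      have hcard : (s.filter fun x => Tr m (b * x) = 1).card
          = if Tr m b = 1 then 2*j+1 else 2*j+2 := by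
        rw [hs, Finset.filter_erase, Finset.filter_erase]
        have h0not : (0 : GaloisField 2 m)
            ∉ Finset.univ.filter fun x => Tr m (b * x) = 1 := by
          simp only [Finset.mem_filter, Finset.mem_univ, true_and]
          rw [mul_zero, Tr_zero]
          decide
        rw [Finset.erase_eq_of_notMem h0not]
        have hcnt : (Finset.univ.filter fun x => Tr m (b * x) = 1).card = 2*j+2 := by
          have := cntT_eq hm1 hb0 1
          unfold cntT at this
          rw [this, hh]
        by_cases hTb : Tr m b = 1
        · rw [if_pos hTb, Finset.card_erase_of_mem, hcnt]
          · omega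
          · simp only [Finset.mem_filter, Finset.mem_univ, true_and]
            rwa [mul_one]
        · rw [if_neg hTb, Finset.erase_eq_of_notMem, hcnt]
          simp only [Finset.mem_filter, Finset.mem_univ, true_and]
          rwa [mul_one]
      rw [hsum, hcard]
      by_cases hTb : Tr m b = 1
      · rw [if_pos hTb, if_pos hTb, hTb, zmod2_onep1, if_pos rfl, hq]
        ring
      · rw [if_neg hTb, if_neg hTb, (zmod2_ne1 _).mp hTb, zmod2_onep0,
            if_neg one_ne_zero]
        ring
  · rw [if_neg ha0, gcnt_one, cntT_eq hm1 ha0, hh]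
    by_cases ha1 : a = 1
    · subst ha1
      rw [if_pos rfl]
      have hptwise : ∀ x ∈ s, gcnt m 1 b x = j+1 := by
        intro x hx
        obtain ⟨hx0, hx1⟩ := hsmem x hx
        rw [gcnt_ne _ _ hx0]
        have hne : x ^ 2 + x ≠ 1 * x := by
          apply sq_add_ne_mul hx0
          rw [one_add_one_F]
          exact hx0
        rw [cnt2_eq hm (sq_add_ne hx0 hx1) (by rw [one_mul]; exact hx0) hne, hj]
      rw [Finset.sum_congr rfl hptwise, Finset.sum_const, smul_eq_mul, hscard]
      ring
    · rw [if_neg ha1]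
      have ha10 : a + 1 ≠ 0 := by
        intro h
        rw [CharTwo.add_eq_iff_eq_add, zero_add] at h
        exact ha1 h
      have ha11 : a + 1 ≠ 1 := by
        intro h
        rw [CharTwo.add_eq_iff_eq_add, one_add_one_F] at h
        exact ha0 h
      have hamem : a + 1 ∈ s := by
        rw [hs, Finset.mem_erase, Finset.mem_erase]
        exact ⟨ha11, ha10, Finset.mem_univ _⟩
      have e2 : ∑ x ∈ s, gcnt m a b x
          = gcnt m a b (a+1) + ∑ x ∈ s.erase (a+1), gcnt m a b x :=
        (Finset.add_sum_erase _ _ hamem).symm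
      have huv : (a+1) ^ 2 + (a+1) = a * (a+1) := by
        rw [CharTwo.add_sq, one_pow]
        calc a ^ 2 + 1 + (a + 1) = a ^ 2 + a + (1 + 1) := by ring
        _ = a ^ 2 + a := by rw [one_add_one_F, add_zero]
        _ = a * (a + 1) := by ring
      have hga : gcnt m a b (a+1)
          = if Tr m (b * (a+1)) = 1 then 2*j+2 else 0 := by
        rw [gcnt_ne _ _ ha10, huv, cnt2_uu]
        by_cases hT : Tr m (b * (a+1)) = 1
        · rw [if_pos hT, hT, zmod2_onep1, if_pos rfl,
              cntT_eq hm1 (mul_ne_zero ha0 ha10), hh]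
        · rw [if_neg hT, (zmod2_ne1 _).mp hT, zmod2_onep0, if_neg one_ne_zero]
      have hptwise : ∀ x ∈ s.erase (a+1), gcnt m a b x = j+1 := by
        intro x hx
        have hxa := (Finset.mem_erase.mp hx).1
        obtain ⟨hx0, hx1⟩ := hsmem x (Finset.mem_erase.mp hx).2
        rw [gcnt_ne _ _ hx0,
            cnt2_eq hm (sq_add_ne hx0 hx1) (mul_ne_zero ha0 hx0)
              (sq_add_ne_mul hx0 hxa), hj]
      have hrest : ∑ x ∈ s.erase (a+1), gcnt m a b x = (4*j+1) * (j+1) := by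
        rw [Finset.sum_congr rfl hptwise, Finset.sum_const, smul_eq_mul,
            Finset.card_erase_of_mem hamem, hscard]
        have h41 : 4*j+2-1 = 4*j+1 := by omega
        rw [h41]
      rw [e2, hga, hrest]
      by_cases hT : Tr m (b * (a+1)) = 1
      · rw [if_pos hT, if_pos hT]
        ring
      · rw [if_neg hT, if_neg hT]
        ring

end S15

namespace S15
variable {m : ℕ}

noncomputable def wtv (m : ℕ) (j : ℕ) (a b : GaloisField 2 m) : ℕ :=
  if a = 0 then (if b = 0 then 0 else
    if Tr m b = 1 then 4*(j*j)+10*j+6 else 4*(j*j)+8*j+4)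
  else if a = 1 then 4*(j*j)+8*j+4
  else if Tr m (b*(a+1)) = 1 then 4*(j*j)+9*j+5 else 4*(j*j)+7*j+3

lemma W_eq' (hm : 2 ≤ m) (j : ℕ) (hj : 2 ^ (m - 2) = j + 1) (a b : GaloisField 2 m) :
    ∑ x : GaloisField 2 m, gcnt m a b x = wtv m j a b := W_eq hm j hj a b

lemma sum_split (f : GaloisField 2 m → ℕ) :
    ∑ x : GaloisField 2 m, f x
      = f 0 + (f 1 + ∑ x ∈ (Finset.univ.erase 0).erase 1, f x) := by
  have h1mem : (1 : GaloisField 2 m) ∈ Finset.univ.erase 0 :=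
    Finset.mem_erase.mpr ⟨one_ne_zero, Finset.mem_univ 1⟩
  rw [Finset.add_sum_erase _ _ h1mem, Finset.add_sum_erase _ _ (Finset.mem_univ 0)]

lemma s_card (hm : 2 ≤ m) (j : ℕ) (hj : 2 ^ (m - 2) = j + 1) :
    ((Finset.univ.erase (0 : GaloisField 2 m)).erase 1).card = 4*j+2 := by
  have hq : 2 ^ m = 4*j+4 := by
    rw [show m = (m-2)+2 by omega, pow_add, hj]; ring
  rw [Finset.card_erase_of_mem
        (Finset.mem_erase.mpr ⟨one_ne_zero, Finset.mem_univ 1⟩),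
      Finset.card_erase_of_mem (Finset.mem_univ 0),
      Finset.card_univ, card_F (by omega), hq]
  omega

lemma s_mem {x : GaloisField 2 m}
    (hx : x ∈ (Finset.univ.erase (0 : GaloisField 2 m)).erase 1) : x ≠ 0 ∧ x ≠ 1 := by
  rw [Finset.mem_erase, Finset.mem_erase] at hx
  exact ⟨hx.2.1, hx.1⟩

end S15

namespace S15
variable {m : ℕ}

lemma cnt_mul_right (hm : 2 ≤ m) (j : ℕ) (hj : 2 ^ (m-2) = j+1)
    {v : GaloisField 2 m} (hv : v ≠ 0) (ε : ZMod 2) :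
    (Finset.univ.filter fun b : GaloisField 2 m => Tr m (b * v) = ε).card = 2*j+2 := by
  have hh : 2 ^ (m-1) = 2*j+2 := by
    rw [show m - 1 = (m-2)+1 by omega, pow_succ, hj]; ring
  have h := cntT_eq (m := m) (by omega) hv ε
  unfold cntT at h
  rw [← hh, ← h]
  congr 1
  apply Finset.filter_congr
  intro b _
  rw [mul_comm]

lemma cnt_tr (hm : 2 ≤ m) (j : ℕ) (hj : 2 ^ (m-2) = j+1) (ε : ZMod 2) :
    (Finset.univ.filter fun b : GaloisField 2 m => Tr m b = ε).card = 2*j+2 := by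
  have := cnt_mul_right hm j hj (one_ne_zero (α := GaloisField 2 m)) ε
  rw [← this]
  congr 1
  apply Finset.filter_congr
  intro b _
  rw [mul_one]

lemma inner0_eval (hm : 2 ≤ m) (j : ℕ) (hj : 2 ^ (m-2) = j+1) (w : ℕ) :
    (Finset.univ.filter fun b : GaloisField 2 m => wtv m j 0 b = w).card
      = if w = 0 then 1 else if w = 4*(j*j)+10*j+6 then 2*j+2
        else if w = 4*(j*j)+8*j+4 then 2*j+1 else 0 := by
  have hw : ∀ b : GaloisField 2 m, wtv m j 0 b
      = if b = 0 then 0 else if Tr m b = 1 then 4*(j*j)+10*j+6 else 4*(j*j)+8*j+4 := by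
    intro b; simp [wtv]
  by_cases h0 : w = 0
  · subst h0
    rw [if_pos rfl]
    have : (Finset.univ.filter fun b : GaloisField 2 m => wtv m j 0 b = 0)
        = {0} := by
      ext b
      simp only [Finset.mem_filter, Finset.mem_univ, true_and, Finset.mem_singleton]
      rw [hw b]
      constructor
      · intro h
        by_contra hb
        rw [if_neg hb] at h
        split_ifs at h <;> omega
      · intro h
        rw [if_pos h]
    rw [this, Finset.card_singleton]
  · rw [if_neg h0]
    by_cases h4 : w = 4*(j*j)+10*j+6
    · subst h4
      rw [if_pos rfl]
      have : (Finset.univ.filter fun b : GaloisField 2 m => wtv m j 0 b = 4*(j*j)+10*j+6)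
          = Finset.univ.filter fun b : GaloisField 2 m => Tr m b = 1 := by
        apply Finset.filter_congr
        intro b _
        rw [hw b]
        by_cases hb : b = 0
        · subst hb
          rw [if_pos rfl, Tr_zero]
          constructor
          · intro h; omega
          · intro h; exact absurd h (by decide)
        · rw [if_neg hb]
          by_cases ht : Tr m b = 1
          · simp [ht]
          · rw [if_neg ht]
            constructor
            · intro h; omega
            · intro h; exact absurd h ht
      rw [this, cnt_tr hm j hj]
    · rw [if_neg h4]
      by_cases h2 : w = 4*(j*j)+8*j+4
      · subst h2
        rw [if_pos rfl]
        have : (Finset.univ.filter fun b : GaloisField 2 m => wtv m j 0 b = 4*(j*j)+8*j+4)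
            = (Finset.univ.filter fun b : GaloisField 2 m => Tr m b = 0).erase 0 := by
          ext b
          simp only [Finset.mem_filter, Finset.mem_univ, true_and, Finset.mem_erase]
          rw [hw b]
          by_cases hb : b = 0
          · subst hb
            rw [if_pos rfl]
            constructor
            · intro h; omega
            · intro h; exact absurd rfl h.1
          · rw [if_neg hb]
            by_cases ht : Tr m b = 1
            · rw [if_pos ht]
              constructor
              · intro h; omega
              · intro h
                rw [ht] at h
                exact absurd h.2 (by decide)
            · rw [if_neg ht]
              simp [hb, (zmod2_ne1 _).mp ht]
        rw [this, Finset.card_erase_of_mem, cnt_tr hm j hj]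
        · omega
        · simp only [Finset.mem_filter, Finset.mem_univ, true_and]
          exact Tr_zero
      · rw [if_neg h2, Finset.card_eq_zero]
        ext b
        simp only [Finset.mem_filter, Finset.mem_univ, true_and, Finset.notMem_empty,
          iff_false]
        rw [hw b]
        split_ifs <;> first | contradiction | omega

lemma inner1_eval (hm : 2 ≤ m) (j : ℕ) (hj : 2 ^ (m-2) = j+1) (w : ℕ) :
    (Finset.univ.filter fun b : GaloisField 2 m => wtv m j 1 b = w).card
      = if w = 4*(j*j)+8*j+4 then 4*j+4 else 0 := by
  have hw : ∀ b : GaloisField 2 m, wtv m j 1 b = 4*(j*j)+8*j+4 := by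
    intro b; simp [wtv]
  by_cases h2 : w = 4*(j*j)+8*j+4
  · subst h2
    rw [if_pos rfl]
    have : (Finset.univ.filter fun b : GaloisField 2 m => wtv m j 1 b = 4*(j*j)+8*j+4)
        = Finset.univ := by
      ext b
      simp [hw b]
    rw [this, Finset.card_univ, card_F (by omega : 1 ≤ m),
        show m = (m-2)+2 by omega, pow_add, hj]
    ring
  · rw [if_neg h2, Finset.card_eq_zero]
    ext b
    simp only [Finset.mem_filter, Finset.mem_univ, true_and, Finset.notMem_empty, iff_false]
    rw [hw b]
    exact fun h => h2 h.symm

lemma innerS_eval (hm : 2 ≤ m) (j : ℕ) (hj : 2 ^ (m-2) = j+1)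
    {a : GaloisField 2 m} (ha0 : a ≠ 0) (ha1 : a ≠ 1) (w : ℕ) :
    (Finset.univ.filter fun b : GaloisField 2 m => wtv m j a b = w).card
      = if w = 4*(j*j)+9*j+5 then 2*j+2 else if w = 4*(j*j)+7*j+3 then 2*j+2 else 0 := by
  have ha10 : a + 1 ≠ 0 := by
    intro h
    rw [CharTwo.add_eq_iff_eq_add, zero_add] at h
    exact ha1 h
  have hw : ∀ b : GaloisField 2 m, wtv m j a b
      = if Tr m (b*(a+1)) = 1 then 4*(j*j)+9*j+5 else 4*(j*j)+7*j+3 := by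
    intro b; simp [wtv, ha0, ha1]
  by_cases h3 : w = 4*(j*j)+9*j+5
  · subst h3
    rw [if_pos rfl]
    have : (Finset.univ.filter fun b : GaloisField 2 m => wtv m j a b = 4*(j*j)+9*j+5)
        = Finset.univ.filter fun b : GaloisField 2 m => Tr m (b*(a+1)) = 1 := by
      apply Finset.filter_congr
      intro b _
      rw [hw b]
      by_cases ht : Tr m (b*(a+1)) = 1
      · simp [ht]
      · rw [if_neg ht]
        constructor
        · intro h; omega
        · intro h; exact absurd h ht
    rw [this, cnt_mul_right hm j hj ha10]
  · rw [if_neg h3]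
    by_cases h1 : w = 4*(j*j)+7*j+3
    · subst h1
      rw [if_pos rfl]
      have : (Finset.univ.filter fun b : GaloisField 2 m => wtv m j a b = 4*(j*j)+7*j+3)
          = Finset.univ.filter fun b : GaloisField 2 m => Tr m (b*(a+1)) = 0 := by
        apply Finset.filter_congr
        intro b _
        rw [hw b]
        by_cases ht : Tr m (b*(a+1)) = 1
        · rw [if_pos ht, ht]
          constructor
          · intro h; omega
          · intro h; exact absurd h (by decide)
        · rw [if_neg ht]
          simp [(zmod2_ne1 _).mp ht]
      rw [this, cnt_mul_right hm j hj ha10]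
    · rw [if_neg h1, Finset.card_eq_zero]
      ext b
      simp only [Finset.mem_filter, Finset.mem_univ, true_and, Finset.notMem_empty, iff_false]
      rw [hw b]
      split_ifs <;> first | contradiction | omega

end S15

namespace S15
lemma wt_formula {m : ℕ} (hm : 2 ≤ m) (j : ℕ) (hj : 2 ^ (m - 2) = j + 1)
    (a b : GaloisField 2 m) :
    (Finset.univ.filter
      (fun p : GaloisField 2 m × GaloisField 2 m =>
        (p.1 ≠ 0 ∧ Tr m (p.2 * p.1 ^ 2 + p.1 * p.2) = 0)
          ∧ Tr m (a * p.1 * p.2 + b * p.1) = 1)).card = wtv m j a b := by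
  have h := W_eq' hm j hj a b
  unfold gcnt at h
  rw [← h]
  exact card_filter_prod
    (fun x y => (x ≠ 0 ∧ Tr m (y * x ^ 2 + x * y) = 0)
      ∧ Tr m (a * x * y + b * x) = 1)
end S15


open S15

set_option maxHeartbeats 2000000

theorem stmt15 (m : ℕ) (hm : 2 ≤ m) :
    let D3 : Finset (GaloisField 2 m × GaloisField 2 m) :=
      Finset.univ.filter (fun p => p.1 ≠ 0 ∧ Tr m (p.2 * p.1 ^ 2 + p.1 * p.2) = 0)
    let wt : GaloisField 2 m × GaloisField 2 m → ℕ := fun c =>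
      (D3.filter (fun p => Tr m (c.1 * p.1 * p.2 + c.2 * p.1) = 1)).card
    let A : ℕ → ℕ := fun w =>
      (Finset.univ.filter (fun c : GaloisField 2 m × GaloisField 2 m => wt c = w)).card
    A 0 = 1 ∧
    (∀ c : GaloisField 2 m × GaloisField 2 m, wt c = 0 → c = (0, 0)) ∧
    A (2 ^ (m - 2) * (2 ^ m - 1)) = 2 ^ m * (2 ^ (m - 1) - 1) ∧
    A (2 ^ (2 * m - 2)) = 2 ^ m + 2 ^ (m - 1) - 1 ∧
    A (2 ^ (m - 2) * (2 ^ m + 1)) = 2 ^ m * (2 ^ (m - 1) - 1) ∧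
    A (2 ^ (m - 1) * (2 ^ (m - 1) + 1)) = 2 ^ (m - 1) ∧
    (∀ w : ℕ, w ≠ 0 → w ≠ 2 ^ (m - 2) * (2 ^ m - 1) → w ≠ 2 ^ (2 * m - 2) →
      w ≠ 2 ^ (m - 2) * (2 ^ m + 1) → w ≠ 2 ^ (m - 1) * (2 ^ (m - 1) + 1) → A w = 0) ∧
    D3.card = 2 ^ (2 * m - 1) ∧
    (Finset.univ.image (fun c : GaloisField 2 m × GaloisField 2 m =>
        fun p : GaloisField 2 m × GaloisField 2 m =>
          if p ∈ D3 then Tr m (c.1 * p.1 * p.2 + c.2 * p.1) else 0)).card = 2 ^ (2 * m) ∧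
    (∀ c : GaloisField 2 m × GaloisField 2 m, c ≠ (0, 0) →
      2 ^ (m - 2) * (2 ^ m - 1) ≤ wt c) ∧
    (∃ c : GaloisField 2 m × GaloisField 2 m, wt c = 2 ^ (m - 2) * (2 ^ m - 1)) ∧
    ((Finset.univ.image (fun c : GaloisField 2 m × GaloisField 2 m => wt c)).erase 0).card
      = 4 := by
  intro D3 wt A
  have hD3 : D3 = Finset.univ.filter
      (fun p : GaloisField 2 m × GaloisField 2 m =>
        p.1 ≠ 0 ∧ Tr m (p.2 * p.1 ^ 2 + p.1 * p.2) = 0) := rfl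
  obtain ⟨j, hj⟩ : ∃ j, 2 ^ (m - 2) = j + 1 :=
    ⟨2 ^ (m - 2) - 1, by have := Nat.one_le_two_pow (n := m - 2); omega⟩
  have hq : 2 ^ m = 4 * j + 4 := by
    rw [show m = (m - 2) + 2 by omega, pow_add, hj]; ring
  have hh : 2 ^ (m - 1) = 2 * j + 2 := by
    rw [show m - 1 = (m - 2) + 1 by omega, pow_succ, hj]; ring
  have eS1 : 2 ^ (m - 2) * (2 ^ m - 1) = 4 * (j * j) + 7 * j + 3 := by
    rw [hj, show 2 ^ m - 1 = 4 * j + 3 by omega]; ring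
  have eS2 : 2 ^ (2 * m - 2) = 4 * (j * j) + 8 * j + 4 := by
    rw [show 2 * m - 2 = (m - 2) + ((m - 2) + 2) by omega, pow_add, pow_add, hj]; ring
  have eS3 : 2 ^ (m - 2) * (2 ^ m + 1) = 4 * (j * j) + 9 * j + 5 := by
    rw [hj, show 2 ^ m + 1 = 4 * j + 5 by omega]; ring
  have eS4 : 2 ^ (m - 1) * (2 ^ (m - 1) + 1) = 4 * (j * j) + 10 * j + 6 := by
    rw [hh]; ring
  have eC1 : 2 ^ m * (2 ^ (m - 1) - 1) = (4 * j + 2) * (2 * j + 2) := by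
    rw [hq, show 2 ^ (m - 1) - 1 = 2 * j + 1 by omega]; ring
  -- the central weight formula
  have hwtv : ∀ c : GaloisField 2 m × GaloisField 2 m, wt c = wtv m j c.1 c.2 := by
    intro c
    have h1 : wt c = (Finset.univ.filter
        (fun p : GaloisField 2 m × GaloisField 2 m =>
          (p.1 ≠ 0 ∧ Tr m (p.2 * p.1 ^ 2 + p.1 * p.2) = 0)
            ∧ Tr m (c.1 * p.1 * p.2 + c.2 * p.1) = 1)).card := by
      show (D3.filter _).card = _
      rw [hD3, Finset.filter_filter]
    rw [h1]
    exact wt_formula hm j hj c.1 c.2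
  -- zero weight only for zero codeword
  have hzero : ∀ c : GaloisField 2 m × GaloisField 2 m, wt c = 0 → c = (0, 0) := by
    intro c h
    rw [hwtv c] at h
    unfold wtv at h
    by_cases h1 : c.1 = 0
    · rw [if_pos h1] at h
      by_cases h2 : c.2 = 0
      · exact Prod.ext_iff.mpr ⟨h1, h2⟩
      · rw [if_neg h2] at h; split_ifs at h <;> omega
    · rw [if_neg h1] at h; split_ifs at h <;> omega
  -- fiberwise A
  have hAfib : ∀ w, A w = ∑ a : GaloisField 2 m,
      (Finset.univ.filter fun b => wtv m j a b = w).card := by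
    intro w
    have h1 : A w = (Finset.univ.filter
        (fun c : GaloisField 2 m × GaloisField 2 m => wtv m j c.1 c.2 = w)).card := by
      show (Finset.univ.filter _).card = _
      congr 1
      apply Finset.filter_congr
      intro c _
      rw [hwtv c]
    rw [h1]
    exact card_filter_prod (fun a b => wtv m j a b = w)
  -- evaluation of A at the five values
  have hAeval : ∀ w, A w = (if w = 0 then 1 else if w = 4*(j*j)+10*j+6 then 2*j+2
        else if w = 4*(j*j)+8*j+4 then 2*j+1 else 0)
      + ((if w = 4*(j*j)+8*j+4 then 4*j+4 else 0)
      + (4*j+2) * (if w = 4*(j*j)+9*j+5 then 2*j+2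
          else if w = 4*(j*j)+7*j+3 then 2*j+2 else 0)) := by
    intro w
    rw [hAfib w, sum_split (fun a => (Finset.univ.filter
        fun b => wtv m j a b = w).card)]
    have hS : ∑ x ∈ (Finset.univ.erase (0 : GaloisField 2 m)).erase 1,
        (Finset.univ.filter fun b => wtv m j x b = w).card
        = (4*j+2) * (if w = 4*(j*j)+9*j+5 then 2*j+2
            else if w = 4*(j*j)+7*j+3 then 2*j+2 else 0) := by
      have hpt : ∀ x ∈ (Finset.univ.erase (0 : GaloisField 2 m)).erase 1,
          (Finset.univ.filter fun b => wtv m j x b = w).card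
          = (if w = 4*(j*j)+9*j+5 then 2*j+2
              else if w = 4*(j*j)+7*j+3 then 2*j+2 else 0) := by
        intro x hx
        obtain ⟨hx0, hx1⟩ := s_mem hx
        exact innerS_eval hm j hj hx0 hx1 w
      rw [Finset.sum_congr rfl hpt, Finset.sum_const, smul_eq_mul, s_card hm j hj]
    rw [hS, inner0_eval hm j hj, inner1_eval hm j hj]
  refine ⟨?_, hzero, ?_, ?_, ?_, ?_, ?_, ?_, ?_, ?_, ?_, ?_⟩
  · -- A 0 = 1
    rw [hAeval 0]
    split_ifs <;> first | contradiction | omega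
  · -- A W1
    rw [eS1, hAeval, eC1]
    split_ifs <;> first | contradiction | omega
  · -- A W2
    rw [eS2, hAeval]
    split_ifs <;> first | contradiction | omega
  · -- A W3
    rw [eS3, hAeval, eC1]
    split_ifs <;> first | contradiction | omega
  · -- A W4
    rw [eS4, hAeval]
    split_ifs <;> first | contradiction | omega
  · -- other weights
    intro w h0 h1 h2 h3 h4
    rw [eS1] at h1; rw [eS2] at h2; rw [eS3] at h3; rw [eS4] at h4
    rw [hAeval]
    split_ifs <;> first | contradiction | omega
  · -- D3.card
    have h2 : D3.card = ∑ x : GaloisField 2 m, (Finset.univ.filter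
        fun y => x ≠ 0 ∧ Tr m (y * x ^ 2 + x * y) = 0).card := by
      rw [hD3]
      exact card_filter_prod (fun x y => x ≠ 0 ∧ Tr m (y * x ^ 2 + x * y) = 0)
    rw [h2, sum_split (fun x => (Finset.univ.filter
        fun y => x ≠ 0 ∧ Tr m (y * x ^ 2 + x * y) = 0).card)]
    have hd0 : (Finset.univ.filter fun y : GaloisField 2 m =>
        (0 : GaloisField 2 m) ≠ 0 ∧ Tr m (y * (0:GaloisField 2 m) ^ 2 + 0 * y) = 0).card
        = 0 := by
      rw [Finset.card_eq_zero]
      ext y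
      simp
    have hd1 : (Finset.univ.filter fun y : GaloisField 2 m =>
        (1 : GaloisField 2 m) ≠ 0 ∧ Tr m (y * (1:GaloisField 2 m) ^ 2 + 1 * y) = 0).card
        = 4*j+4 := by
      have : (Finset.univ.filter fun y : GaloisField 2 m =>
          (1 : GaloisField 2 m) ≠ 0 ∧ Tr m (y * (1:GaloisField 2 m) ^ 2 + 1 * y) = 0)
          = Finset.univ := by
        ext y
        simp only [Finset.mem_filter, Finset.mem_univ, true_and, iff_true]
        refine ⟨one_ne_zero, ?_⟩
        rw [show y * (1:GaloisField 2 m) ^ 2 + 1 * y = y + y by ring,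
            CharTwo.add_self_eq_zero, Tr_zero]
      rw [this, Finset.card_univ, card_F (by omega : 1 ≤ m), hq]
    have hds : ∀ x ∈ (Finset.univ.erase (0:GaloisField 2 m)).erase 1,
        (Finset.univ.filter fun y : GaloisField 2 m =>
          x ≠ 0 ∧ Tr m (y * x ^ 2 + x * y) = 0).card = 2*j+2 := by
      intro x hx
      obtain ⟨hx0, hx1⟩ := s_mem hx
      have heq : (Finset.univ.filter fun y : GaloisField 2 m =>
          x ≠ 0 ∧ Tr m (y * x ^ 2 + x * y) = 0)
          = Finset.univ.filter fun y : GaloisField 2 m =>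
            Tr m ((x ^ 2 + x) * y) = 0 := by
        apply Finset.filter_congr
        intro y _
        rw [show y * x ^ 2 + x * y = (x ^ 2 + x) * y by ring]
        simp [hx0]
      rw [heq]
      have := cntT_eq (m := m) (by omega) (sq_add_ne hx0 hx1) 0
      unfold cntT at this
      rw [this, hh]
    rw [hd0, hd1, Finset.sum_congr rfl hds, Finset.sum_const, smul_eq_mul,
        s_card hm j hj]
    have e1 : (4*j+2) * (2*j+2) = 8*(j*j)+12*j+4 := by ring
    have e2 : 2 ^ (2*m-1) = 8*(j*j)+16*j+8 := by
      rw [show 2*m-1 = (m-2)+((m-2)+3) by omega, pow_add, pow_add, hj]; ring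
    omega
  · -- number of codewords
    have hinj : Function.Injective
        (fun c : GaloisField 2 m × GaloisField 2 m =>
          fun p : GaloisField 2 m × GaloisField 2 m =>
            if p ∈ D3 then Tr m (c.1 * p.1 * p.2 + c.2 * p.1) else 0) := by
      intro c c' hcc
      simp only at hcc
      have hpt : ∀ p ∈ D3, Tr m (c.1 * p.1 * p.2 + c.2 * p.1)
          = Tr m (c'.1 * p.1 * p.2 + c'.2 * p.1) := by
        intro p hp
        have h := congrFun hcc p
        rw [if_pos hp, if_pos hp] at h
        exact h
      have hd : wt (c.1 + c'.1, c.2 + c'.2) = 0 := by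
        show (D3.filter _).card = 0
        rw [Finset.card_eq_zero, Finset.filter_eq_empty_iff]
        intro p hp
        have he : Tr m ((c.1 + c'.1, c.2 + c'.2).1 * p.1 * p.2
            + (c.1 + c'.1, c.2 + c'.2).2 * p.1)
            = Tr m (c.1 * p.1 * p.2 + c.2 * p.1)
              + Tr m (c'.1 * p.1 * p.2 + c'.2 * p.1) := by
          rw [← Tr_add]
          congr 1
          show (c.1 + c'.1) * p.1 * p.2 + (c.2 + c'.2) * p.1 = _
          ring
        rw [he, hpt p hp, CharTwo.add_self_eq_zero]
        decide
      have h00 := hzero _ hd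
      have h1 : c.1 + c'.1 = 0 := congrArg Prod.fst h00
      have h2 : c.2 + c'.2 = 0 := congrArg Prod.snd h00
      rw [CharTwo.add_eq_iff_eq_add, zero_add] at h1 h2
      exact Prod.ext_iff.mpr ⟨h1, h2⟩
    rw [Finset.card_image_of_injective _ hinj, Finset.card_univ, Fintype.card_prod,
        card_F (by omega : 1 ≤ m), show 2*m = m + m by omega, pow_add]
  · -- minimum distance lower bound
    intro c hc
    rw [eS1, hwtv c]
    unfold wtv
    split_ifs with g1 g2 g3 g4
    · exact absurd (Prod.ext_iff.mpr ⟨g1, g2⟩) hc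
    all_goals omega
  · -- minimum distance attained
    obtain ⟨a0, ha0s⟩ := Finset.card_pos.mp
      (by rw [s_card hm j hj]; omega :
        0 < ((Finset.univ.erase (0:GaloisField 2 m)).erase 1).card)
    obtain ⟨ha0, ha1⟩ := s_mem ha0s
    refine ⟨(a0, 0), ?_⟩
    rw [eS1, hwtv]
    unfold wtv
    rw [if_neg ha0, if_neg ha1, if_neg ?_]
    show ¬ Tr m (0 * (a0 + 1)) = 1
    rw [zero_mul, Tr_zero]
    decide
  · -- four nonzero weights
    obtain ⟨a0, ha0s⟩ := Finset.card_pos.mp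
      (by rw [s_card hm j hj]; omega :
        0 < ((Finset.univ.erase (0:GaloisField 2 m)).erase 1).card)
    obtain ⟨ha0, ha1⟩ := s_mem ha0s
    have ha10 : a0 + 1 ≠ 0 := by
      intro h
      rw [CharTwo.add_eq_iff_eq_add, zero_add] at h
      exact ha1 h
    obtain ⟨z, hz⟩ := Algebra.trace_surjective (ZMod 2) (GaloisField 2 m) 1
    have hzz : Tr m z = 1 := hz
    have hz0 : z ≠ 0 := by
      intro h
      rw [h, Tr_zero] at hzz
      exact absurd hzz (by decide)
    have himg : Finset.univ.image (fun c : GaloisField 2 m × GaloisField 2 m => wt c)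
        = {0, 4*(j*j)+7*j+3, 4*(j*j)+8*j+4, 4*(j*j)+9*j+5, 4*(j*j)+10*j+6} := by
      ext w
      simp only [Finset.mem_image, Finset.mem_univ, true_and, Finset.mem_insert,
        Finset.mem_singleton]
      constructor
      · rintro ⟨c, rfl⟩
        rw [hwtv c]
        unfold wtv
        split_ifs <;> tauto
      · intro hw
        rcases hw with h | h | h | h | h
        · refine ⟨(0, 0), ?_⟩
          rw [hwtv, h]
          unfold wtv
          simp
        · refine ⟨(a0, 0), ?_⟩
          rw [hwtv, h]
          unfold wtv
          rw [if_neg ha0, if_neg ha1, if_neg ?_]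
          show ¬ Tr m (0 * (a0 + 1)) = 1
          rw [zero_mul, Tr_zero]
          decide
        · refine ⟨(1, 0), ?_⟩
          rw [hwtv, h]
          unfold wtv
          rw [if_neg one_ne_zero, if_pos rfl]
        · refine ⟨(a0, (a0 + 1)⁻¹ * z), ?_⟩
          rw [hwtv, h]
          unfold wtv
          rw [if_neg ha0, if_neg ha1, if_pos ?_]
          show Tr m ((a0 + 1)⁻¹ * z * (a0 + 1)) = 1
          rw [show (a0 + 1)⁻¹ * z * (a0 + 1) = z * ((a0 + 1)⁻¹ * (a0 + 1)) by ring,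
              inv_mul_cancel₀ ha10, mul_one]
          exact hzz
        · refine ⟨(0, z), ?_⟩
          rw [hwtv, h]
          unfold wtv
          rw [if_pos rfl, if_neg hz0, if_pos hzz]
    rw [himg]
    rw [show ({0, 4*(j*j)+7*j+3, 4*(j*j)+8*j+4, 4*(j*j)+9*j+5, 4*(j*j)+10*j+6} : Finset ℕ)
        = insert 0 {4*(j*j)+7*j+3, 4*(j*j)+8*j+4, 4*(j*j)+9*j+5, 4*(j*j)+10*j+6} from rfl,
      Finset.erase_insert ?_]
    · have n1 : 4*(j*j)+7*j+3 ∉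
          ({4*(j*j)+8*j+4, 4*(j*j)+9*j+5, 4*(j*j)+10*j+6} : Finset ℕ) := by
        simp only [Finset.mem_insert, Finset.mem_singleton]
        omega
      have n2 : 4*(j*j)+8*j+4 ∉ ({4*(j*j)+9*j+5, 4*(j*j)+10*j+6} : Finset ℕ) := by
        simp only [Finset.mem_insert, Finset.mem_singleton]
        omega
      have n3 : 4*(j*j)+9*j+5 ∉ ({4*(j*j)+10*j+6} : Finset ℕ) := by
        simp only [Finset.mem_singleton]
        omega
      rw [Finset.card_insert_of_notMem n1, Finset.card_insert_of_notMem n2,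
          Finset.card_insert_of_notMem n3, Finset.card_singleton]
    · simp only [Finset.mem_insert, Finset.mem_singleton]
      omega
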